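/- arXiv:0811.2638 — 3 statements merged into one kernel-verified Lean document; each statement's English description precedes it below -/
import Mathlib

section
/- Let λ̂ = -1/2, μ̂ = -1, ν̂ = (1/2)√(1+8κ) with κ ∈ ℝ, κ ≥ -1/8. Then at least one of λ̂+μ̂+ν̂, -λ̂+μ̂+ν̂, λ̂-μ̂+ν̂, λ̂+μ̂-ν̂ is an odd integer if and only if κ = (n+1)(2n+3), or κ = (n+1)(2n+1), or κ = n(2n+1) for some integer n. -/
/-- Kimura's condition (i) for the collinear problem: one of the four exponent
combinations is an odd integer iff `κ` lies in one of the three integer families. -/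
theorem kimura_condition_collinear
    (κ lam mu nu : ℝ) (hκ : -(1 / 8) ≤ κ)
    (hlam : lam = -(1 / 2)) (hmu : mu = -1)
    (hnu : nu = Real.sqrt (1 + 8 * κ) / 2) :
    ((∃ k : ℤ, lam + mu + nu = 2 * k + 1) ∨
     (∃ k : ℤ, -lam + mu + nu = 2 * k + 1) ∨
     (∃ k : ℤ, lam - mu + nu = 2 * k + 1) ∨
     (∃ k : ℤ, lam + mu - nu = 2 * k + 1))
    ↔ ((∃ n : ℤ, κ = (n + 1) * (2 * n + 3)) ∨
       (∃ n : ℤ, κ = (n + 1) * (2 * n + 1)) ∨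
       (∃ n : ℤ, κ = n * (2 * n + 1))) := by
  subst hlam hmu hnu
  have hnn : (0:ℝ) ≤ 1 + 8 * κ := by linarith
  constructor
  · rintro (⟨k, hk⟩ | ⟨k, hk⟩ | ⟨k, hk⟩ | ⟨k, hk⟩)
    · left
      refine ⟨k, ?_⟩
      have h1 : Real.sqrt (1 + 8 * κ) = 4 * (k:ℝ) + 5 := by linarith
      have h2 : 1 + 8 * κ = (4 * (k:ℝ) + 5) ^ 2 := by
        rw [← h1]; exact (Real.sq_sqrt hnn).symm
      push_cast
      nlinarith [h2]
    · right; left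
      refine ⟨k, ?_⟩
      have h1 : Real.sqrt (1 + 8 * κ) = 4 * (k:ℝ) + 3 := by linarith
      have h2 : 1 + 8 * κ = (4 * (k:ℝ) + 3) ^ 2 := by
        rw [← h1]; exact (Real.sq_sqrt hnn).symm
      push_cast
      nlinarith [h2]
    · right; right
      refine ⟨k, ?_⟩
      have h1 : Real.sqrt (1 + 8 * κ) = 4 * (k:ℝ) + 1 := by linarith
      have h2 : 1 + 8 * κ = (4 * (k:ℝ) + 1) ^ 2 := by
        rw [← h1]; exact (Real.sq_sqrt hnn).symm
      push_cast
      nlinarith [h2]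
    · left
      refine ⟨k, ?_⟩
      have h1 : Real.sqrt (1 + 8 * κ) = -(4 * (k:ℝ) + 5) := by linarith
      have h2 : 1 + 8 * κ = (-(4 * (k:ℝ) + 5)) ^ 2 := by
        rw [← h1]; exact (Real.sq_sqrt hnn).symm
      push_cast
      nlinarith [h2]
  · rintro (⟨n, hn⟩ | ⟨n, hn⟩ | ⟨n, hn⟩)
    · have h2 : 1 + 8 * κ = (4 * (n:ℝ) + 5) ^ 2 := by rw [hn]; push_cast; ring
      have hs : Real.sqrt (1 + 8 * κ) = |4 * (n:ℝ) + 5| := by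
        rw [h2, Real.sqrt_sq_eq_abs]
      rcases abs_cases (4 * (n:ℝ) + 5) with ⟨ha, _⟩ | ⟨ha, _⟩
      · left; exact ⟨n, by rw [hs, ha]; push_cast; ring⟩
      · right; right; right; exact ⟨n, by rw [hs, ha]; push_cast; ring⟩
    · have h2 : 1 + 8 * κ = (4 * (n:ℝ) + 3) ^ 2 := by rw [hn]; push_cast; ring
      have hs : Real.sqrt (1 + 8 * κ) = |4 * (n:ℝ) + 3| := by
        rw [h2, Real.sqrt_sq_eq_abs]
      rcases abs_cases (4 * (n:ℝ) + 3) with ⟨ha, _⟩ | ⟨ha, _⟩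
      · right; left; exact ⟨n, by rw [hs, ha]; push_cast; ring⟩
      · left; exact ⟨-n - 2, by rw [hs, ha]; push_cast; ring⟩
    · have h2 : 1 + 8 * κ = (4 * (n:ℝ) + 1) ^ 2 := by rw [hn]; push_cast; ring
      have hs : Real.sqrt (1 + 8 * κ) = |4 * (n:ℝ) + 1| := by
        rw [h2, Real.sqrt_sq_eq_abs]
      rcases abs_cases (4 * (n:ℝ) + 1) with ⟨ha, _⟩ | ⟨ha, _⟩
      · right; right; left; exact ⟨n, by rw [hs, ha]; push_cast; ring⟩
      · right; left; exact ⟨-n - 1, by rw [hs, ha]; push_cast; ring⟩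
end

section
/- Under the change of variable z = sech²(s), the equation y''(s) - (1/4)(1 + 4ω² - 3z)y = 0 becomes the hypergeometric-type equation y''(z) + (1/z + (1/2)/(z-1)) y'(z) + ((-1/16 - ω²/4)/z² + (-1/8 + ω²/4)/(z(z-1))) y(z) = 0. -/
/-!
For `z = sech² s` one has `z' = -2 sinh s / cosh³ s`, `z'² = 4z²(1 - z)` and `z'' = 4z - 6z²`,
so the chain rule gives `y'' = z'' Y'(z) + z'² Y''(z)`. Hence the left-hand side of the equation
in `s` is `4z²(1 - z)` times that of the rational equation in `z`, and this factor is nonzero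
because `0 < z < 1` for `s > 0`.
-/

open Real

theorem deriv_deriv_comp_of_hasDerivAt {E : Type*} [NormedAddCommGroup E] [NormedSpace ℝ E]
    {Y : ℝ → E} {g g' : ℝ → ℝ} {g'' s : ℝ} (hY : Differentiable ℝ Y)
    (hY' : DifferentiableAt ℝ (deriv Y) (g s)) (hg : ∀ x, HasDerivAt g (g' x) x)
    (hg' : HasDerivAt g' g'' s) :
    deriv (deriv fun x => Y (g x)) s = g'' • deriv Y (g s) + g' s ^ 2 • deriv (deriv Y) (g s) := by
  have hfirst : deriv (fun x => Y (g x)) = fun x => g' x • deriv Y (g x) :=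
    funext fun x => ((hY (g x)).hasDerivAt.scomp x (hg x)).deriv
  have hsecond := hg'.fun_smul (hY'.hasDerivAt.scomp s (hg s))
  rw [hfirst]
  simpa only [Function.comp_apply, smul_smul, ← sq, add_comm] using hsecond.deriv

theorem hasDerivAt_inv_cosh_sq (x : ℝ) :
    HasDerivAt (fun x => (cosh x)⁻¹ ^ 2) (-2 * sinh x * (cosh x)⁻¹ ^ 3) x :=
  (((hasDerivAt_cosh x).fun_inv (cosh_pos x).ne').fun_pow 2).congr_deriv (by ring)

theorem hasDerivAt_sinh_mul_inv_cosh_pow_three (x : ℝ) :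
    HasDerivAt (fun x => -2 * sinh x * (cosh x)⁻¹ ^ 3)
      (4 * (cosh x)⁻¹ ^ 2 - 6 * ((cosh x)⁻¹ ^ 2) ^ 2) x := by
  refine (((hasDerivAt_sinh x).const_mul (-2)).fun_mul
    (((hasDerivAt_cosh x).fun_inv (cosh_pos x).ne').fun_pow 3)).congr_deriv ?_
  norm_num
  field_simp [(cosh_pos x).ne']
  linear_combination 6 * sinh_sq x

theorem sq_sinh_mul_inv_cosh_pow_three (x : ℝ) :
    (-2 * sinh x * (cosh x)⁻¹ ^ 3) ^ 2 = 4 * ((cosh x)⁻¹ ^ 2) ^ 2 * (1 - (cosh x)⁻¹ ^ 2) := by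
  field_simp [(cosh_pos x).ne']
  linear_combination 4 * sinh_sq x

theorem inv_cosh_sq_mem_Ioo {x : ℝ} (hx : x ≠ 0) : (cosh x)⁻¹ ^ 2 ∈ Set.Ioo 0 1 := by
  have hinv : (cosh x)⁻¹ < 1 := inv_lt_one_of_one_lt₀ (one_lt_cosh.2 hx)
  exact ⟨by positivity, pow_lt_one₀ (by positivity) hinv two_ne_zero⟩

theorem sech_sq_equation_iff {z : ℂ} (hz0 : z ≠ 0) (hz1 : z ≠ 1) (ω2 A B C : ℂ) :
    (4 * z - 6 * z ^ 2) * B + 4 * z ^ 2 * (1 - z) * A - 1 / 4 * (1 + 4 * ω2 - 3 * z) * C = 0 ↔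
      A + (1 / z + (1 / 2) / (z - 1)) * B
        + ((-1 / 16 - ω2 / 4) / z ^ 2 + (-1 / 8 + ω2 / 4) / (z * (z - 1))) * C = 0 := by
  have hz1' : z - 1 ≠ 0 := sub_ne_zero.2 hz1
  have hfactor : (4 * z - 6 * z ^ 2) * B + 4 * z ^ 2 * (1 - z) * A
      - 1 / 4 * (1 + 4 * ω2 - 3 * z) * C = 4 * z ^ 2 * (1 - z) * (A + (1 / z + (1 / 2) / (z - 1)) * B
        + ((-1 / 16 - ω2 / 4) / z ^ 2 + (-1 / 8 + ω2 / 4) / (z * (z - 1))) * C) := by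
    field_simp
    ring
  have hne : 4 * z ^ 2 * (1 - z) ≠ 0 :=
    mul_ne_zero (by simpa using hz0) (sub_ne_zero.2 (Ne.symm hz1))
  rw [hfactor, mul_eq_zero_iff_left hne]

/-- The change of variable `z = sech²(s)` transforms
`y'' - (1/4)(1 + 4ω² - 3z) y = 0` into a hypergeometric-type rational equation. -/
theorem algebrization_sech
    (ω2 : ℂ) (Y : ℝ → ℂ)
    (hY : Differentiable ℝ Y) (hY' : Differentiable ℝ (deriv Y))
    (y : ℝ → ℂ) (hy : y = fun s => Y (((Real.cosh s)⁻¹) ^ 2))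
    (s : ℝ) (hs : 0 < s) :
    (deriv (deriv y) s
        - (1 / 4) * (1 + 4 * ω2 - 3 * (((Real.cosh s)⁻¹ ^ 2 : ℝ) : ℂ)) * y s = 0)
      ↔ (deriv (deriv Y) ((Real.cosh s)⁻¹ ^ 2)
          + (1 / ((((Real.cosh s)⁻¹ ^ 2 : ℝ) : ℂ))
              + (1 / 2) / ((((Real.cosh s)⁻¹ ^ 2 : ℝ) : ℂ) - 1))
            * deriv Y ((Real.cosh s)⁻¹ ^ 2)
          + ((-1 / 16 - ω2 / 4) / ((((Real.cosh s)⁻¹ ^ 2 : ℝ) : ℂ)) ^ 2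
              + (-1 / 8 + ω2 / 4)
                / ((((Real.cosh s)⁻¹ ^ 2 : ℝ) : ℂ)
                    * (((( Real.cosh s)⁻¹ ^ 2 : ℝ) : ℂ) - 1)))
            * Y ((Real.cosh s)⁻¹ ^ 2)
          = 0) := by
  subst hy
  rw [deriv_deriv_comp_of_hasDerivAt hY (hY' _) hasDerivAt_inv_cosh_sq
    (hasDerivAt_sinh_mul_inv_cosh_pow_three s), sq_sinh_mul_inv_cosh_pow_three,
    Complex.real_smul, Complex.real_smul]
  obtain ⟨hz0, hz1⟩ := inv_cosh_sq_mem_Ioo hs.ne'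
  set z := (cosh s)⁻¹ ^ 2
  push_cast
  exact sech_sq_equation_iff (by exact_mod_cast hz0.ne') (by exact_mod_cast hz1.ne) ..
end

section
/- For the two uncoupled Kepler problems potential U(θ) = 1/cos θ + μ/sin θ on (0, π/2) with μ > 0, the point θ_c = arctan(μ^{1/3}) is a critical point of U, and ω² := 2U''(θ_c)/U(θ_c) = 6, independent of μ. -/
/-!
With `c = cos θ`, `s = sin θ` one has `U' = s/c² - μ c/s²` and
`U'' = (1 + s²)/c³ + μ (1 + c²)/s³`. The critical point is where `s³ = μ c³`, i.e. `tan θ = μ^{1/3}`;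
there `μ/s = s²/c³` and `μ (1 + c²)/s³ = (1 + c²)/c³`, so `U = 1/c³` and `U'' = 3/c³`, whence
`2 U''/U = 6` whatever `μ` is.
-/

open Real Filter Topology

noncomputable def keplerPotential (μ θ : ℝ) : ℝ := 1 / cos θ + μ / sin θ

noncomputable def keplerPotentialDeriv (μ θ : ℝ) : ℝ := sin θ / cos θ ^ 2 - μ * cos θ / sin θ ^ 2

noncomputable def keplerPotentialDeriv2 (μ θ : ℝ) : ℝ :=
  (1 + sin θ ^ 2) / cos θ ^ 3 + μ * (1 + cos θ ^ 2) / sin θ ^ 3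

section Derivatives

variable (μ : ℝ) {θ : ℝ}

theorem hasDerivAt_keplerPotential (hc : cos θ ≠ 0) (hs : sin θ ≠ 0) :
    HasDerivAt (keplerPotential μ) (keplerPotentialDeriv μ θ) θ := by
  have h := ((hasDerivAt_const θ 1).div (hasDerivAt_cos θ) hc).add
    ((hasDerivAt_const θ μ).div (hasDerivAt_sin θ) hs)
  exact h.congr_deriv (by simp only [keplerPotentialDeriv]; ring)

theorem hasDerivAt_keplerPotentialDeriv (hc : cos θ ≠ 0) (hs : sin θ ≠ 0) :
    HasDerivAt (keplerPotentialDeriv μ) (keplerPotentialDeriv2 μ θ) θ := by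
  have h := ((hasDerivAt_sin θ).div ((hasDerivAt_cos θ).pow 2) (pow_ne_zero 2 hc)).sub
    (((hasDerivAt_cos θ).const_mul μ).div ((hasDerivAt_sin θ).pow 2) (pow_ne_zero 2 hs))
  refine h.congr_deriv ?_
  simp only [keplerPotentialDeriv2, Pi.pow_apply]
  field_simp
  linear_combination (cos θ * sin θ ^ 4 + μ * cos θ ^ 4 * sin θ) * sin_sq_add_cos_sq θ

end Derivatives

theorem deriv_eq_and_deriv_deriv_eq {f g : ℝ → ℝ} {x g' : ℝ}
    (hf : ∀ᶠ y in 𝓝 x, HasDerivAt f (g y) y) (hg : HasDerivAt g g' x) :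
    deriv f x = g x ∧ deriv (deriv f) x = g' := by
  have hfg : deriv f =ᶠ[𝓝 x] g := hf.mono fun _ hy => hy.deriv
  exact ⟨hfg.self_of_nhds, (hg.congr_of_eventuallyEq hfg).deriv⟩

theorem cos_ne_zero_and_sin_ne_zero_of_mem_Ioo {θ : ℝ} (hθ : θ ∈ Set.Ioo 0 (π / 2)) :
    cos θ ≠ 0 ∧ sin θ ≠ 0 :=
  ⟨(cos_pos_of_mem_Ioo ⟨by linarith [hθ.1, pi_pos], hθ.2⟩).ne',
    (sin_pos_of_mem_Ioo ⟨hθ.1, by linarith [hθ.2, pi_pos]⟩).ne'⟩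

theorem sin_pow_three_eq_of_tan_pow_three_eq {μ θ : ℝ} (hc : cos θ ≠ 0) (h : tan θ ^ 3 = μ) :
    sin θ ^ 3 = μ * cos θ ^ 3 := by
  rw [← tan_mul_cos hc, ← h]
  ring

section CriticalPoint

variable {μ θ : ℝ}

theorem keplerPotentialDeriv_eq_zero (hc : cos θ ≠ 0) (hs : sin θ ≠ 0)
    (h : sin θ ^ 3 = μ * cos θ ^ 3) : keplerPotentialDeriv μ θ = 0 := by
  simp only [keplerPotentialDeriv]
  field_simp
  linear_combination h

theorem keplerPotential_eq (hc : cos θ ≠ 0) (hs : sin θ ≠ 0)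
    (h : sin θ ^ 3 = μ * cos θ ^ 3) : keplerPotential μ θ = 1 / cos θ ^ 3 := by
  simp only [keplerPotential]
  field_simp
  linear_combination sin θ * sin_sq_add_cos_sq θ - h

theorem keplerPotentialDeriv2_eq (hc : cos θ ≠ 0) (hs : sin θ ≠ 0)
    (h : sin θ ^ 3 = μ * cos θ ^ 3) : keplerPotentialDeriv2 μ θ = 3 / cos θ ^ 3 := by
  simp only [keplerPotentialDeriv2]
  field_simp
  linear_combination -(1 + cos θ ^ 2) * h + sin θ ^ 3 * sin_sq_add_cos_sq θ

end CriticalPoint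

/-- For two uncoupled Kepler problems, `θ_c = arctan(μ^{1/3})` is a critical point and
`ω² = 2U''(θ_c)/U(θ_c) = 6`, independent of `μ`. -/
theorem uncoupled_kepler
    (μ : ℝ) (hμ : 0 < μ)
    (U : ℝ → ℝ)
    (hU : ∀ θ ∈ Set.Ioo 0 (π / 2),
      U θ = 1 / Real.cos θ + μ / Real.sin θ)
    (θc : ℝ) (hθc : θc = Real.arctan (μ ^ ((1 : ℝ) / 3))) :
    deriv U θc = 0 ∧
    2 * deriv (deriv U) θc / U θc = 6 := by
  have ht : 0 < μ ^ ((1 : ℝ) / 3) := rpow_pos_of_pos hμ _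
  have hmem : θc ∈ Set.Ioo 0 (π / 2) := hθc ▸ ⟨arctan_pos.mpr ht, arctan_lt_pi_div_two _⟩
  obtain ⟨hc, hs⟩ := cos_ne_zero_and_sin_ne_zero_of_mem_Ioo hmem
  have htan : tan θc ^ 3 = μ := by
    rw [hθc, tan_arctan, one_div]
    exact_mod_cast rpow_inv_natCast_pow hμ.le three_ne_zero
  have hcrit := sin_pow_three_eq_of_tan_pow_three_eq hc htan
  have hUeq : ∀ θ ∈ Set.Ioo 0 (π / 2), U =ᶠ[𝓝 θ] keplerPotential μ := fun θ hθ =>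
    eventuallyEq_of_mem (isOpen_Ioo.mem_nhds hθ) hU
  have hderiv : ∀ᶠ θ in 𝓝 θc, HasDerivAt U (keplerPotentialDeriv μ θ) θ := by
    filter_upwards [isOpen_Ioo.mem_nhds hmem] with θ hθ
    obtain ⟨hcθ, hsθ⟩ := cos_ne_zero_and_sin_ne_zero_of_mem_Ioo hθ
    exact (hasDerivAt_keplerPotential μ hcθ hsθ).congr_of_eventuallyEq (hUeq θ hθ)
  obtain ⟨hU', hU''⟩ :=
    deriv_eq_and_deriv_deriv_eq hderiv (hasDerivAt_keplerPotentialDeriv μ hc hs)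
  refine ⟨hU'.trans (keplerPotentialDeriv_eq_zero hc hs hcrit), ?_⟩
  rw [hU'', (hUeq θc hmem).self_of_nhds, keplerPotentialDeriv2_eq hc hs hcrit,
    keplerPotential_eq hc hs hcrit]
  field_simp
  norm_num
end
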